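/- Let G be a bi-block graph in class B and T_G its associated tree. For all vertices a, b of G there exist vertices a', b' of T_G with d_G(a,b) = d_G(a',b'). -/

import Mathlib

open SimpleGraph

variable {V : Type*}

/-- `v` is a cut-vertex of the graph `G`: deleting `v` disconnects `G`. -/
def CutVtx (G : SimpleGraph V) (v : V) : Prop :=
  ¬ (G.induce {v}ᶜ).Connected

/-- A nonseparable graph: connected and with no cut-vertex. -/
def NoCutVtx {W : Type*} (H : SimpleGraph W) : Prop :=
  H.Connected ∧ ∀ w : W, (H.induce {w}ᶜ).Connected

/-- `B` is (the vertex set of) a block of `G`: a maximal nonseparable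
induced subgraph. -/
def IsBlockSet (G : SimpleGraph V) (B : Set V) : Prop :=
  NoCutVtx (G.induce B) ∧ ∀ C : Set V, B ⊆ C → NoCutVtx (G.induce C) → B = C

/-- The set of cut-vertices of `G`. -/
def cutSet (G : SimpleGraph V) : Set V := {v | CutVtx G v}

/-- The set `B` induces a complete bipartite graph in `G` with
bipartition `(V1, V2)`. -/
def CompBipOn (G : SimpleGraph V) (B V1 V2 : Set V) : Prop :=
  V1.Nonempty ∧ V2.Nonempty ∧ Disjoint V1 V2 ∧ V1 ∪ V2 = B ∧
    ∀ x ∈ B, ∀ y ∈ B, (G.Adj x y ↔ (x ∈ V1 ∧ y ∈ V2) ∨ (x ∈ V2 ∧ y ∈ V1))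

/-- A bi-block graph: a connected graph all of whose blocks are
complete bipartite. -/
def BiBlockGraph (G : SimpleGraph V) : Prop :=
  G.Connected ∧ ∀ B : Set V, IsBlockSet G B → ∃ V1 V2 : Set V, CompBipOn G B V1 V2

/-- The class 𝓑: bi-block graphs with at least two blocks and at most two
cut-vertices in each block. -/
def ClassB (G : SimpleGraph V) : Prop :=
  BiBlockGraph G ∧
  (∃ B1 B2 : Set V, IsBlockSet G B1 ∧ IsBlockSet G B2 ∧ B1 ≠ B2) ∧
  ∀ B : Set V, IsBlockSet G B → (B ∩ cutSet G).ncard ≤ 2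

/-- `S` is an admissible vertex set for the associated tree `T_G`:
it contains all cut-vertices of `G`, both vertices of every `K_{1,1}` block,
exactly one non-cut-vertex from each partite set of every leaf block,
exactly one non-cut-vertex from the cut-vertex-free partite set of every
bridge block whose two cut-vertices share a partite set, and no other
vertices. -/
def AssocSet (G : SimpleGraph V) (S : Set V) : Prop :=
  (∀ v, CutVtx G v → v ∈ S) ∧
  ∀ B V1 V2 : Set V, IsBlockSet G B → CompBipOn G B V1 V2 →
    ((V1.ncard = 1 ∧ V2.ncard = 1) → B ⊆ S) ∧
    (¬ (V1.ncard = 1 ∧ V2.ncard = 1) →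
      (((B ∩ cutSet G).ncard = 1) →
          (S ∩ (V1 \ cutSet G)).ncard = 1 ∧ (S ∩ (V2 \ cutSet G)).ncard = 1) ∧
      (((B ∩ cutSet G).ncard = 2) →
          (((V1 ∩ cutSet G).ncard = 2) →
              (S ∩ (V2 \ cutSet G)).ncard = 1 ∧ S ∩ (V1 \ cutSet G) = ∅) ∧
          (((V2 ∩ cutSet G).ncard = 2) →
              (S ∩ (V1 \ cutSet G)).ncard = 1 ∧ S ∩ (V2 \ cutSet G) = ∅) ∧
          (((V1 ∩ cutSet G).ncard = 1 ∧ (V2 ∩ cutSet G).ncard = 1) →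
              S ∩ (B \ cutSet G) = ∅)))

/-- The eccentricity of a vertex. -/
noncomputable def ecc (G : SimpleGraph V) (v : V) : ℕ := sSup (Set.range (G.dist v))

/-- The diameter of a graph. -/
noncomputable def gdiam (G : SimpleGraph V) : ℕ := sSup (Set.range (ecc G))

/-- The radius of a graph. -/
noncomputable def gradius (G : SimpleGraph V) : ℕ := sInf (Set.range (ecc G))

/-- The center of a graph: vertices of minimum eccentricity. -/
noncomputable def gcenter (G : SimpleGraph V) : Set V := {v | ecc G v = gradius G}

/-- The eccentricity matrix of `G`. -/
noncomputable def eccMatrix (G : SimpleGraph V) : Matrix V V ℝ := fun u v =>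
  if G.dist u v = min (ecc G u) (ecc G v) then (G.dist u v : ℝ) else 0

/-- The spectrum of the eccentricity matrix of `G` is symmetric with respect
to the origin: `μ` is an eigenvalue with multiplicity `l` iff `-μ` is. -/
def SpectrumSymm [Fintype V] [DecidableEq V] (G : SimpleGraph V) : Prop :=
  ∀ (hH : (eccMatrix G).IsHermitian) (μ : ℝ),
    {i | hH.eigenvalues i = μ}.ncard = {i | hH.eigenvalues i = -μ}.ncard

/-- A vertex is diametrically distinguished if it lies on some diametrical
path and is adjacent to some central vertex. -/
noncomputable def DiamDistinguished (G : SimpleGraph V) (u : V) : Prop :=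
  (∃ (a b : V) (p : G.Walk a b), p.IsPath ∧ p.length = G.dist a b ∧
      G.dist a b = gdiam G ∧ u ∈ p.support) ∧
  ∃ z ∈ gcenter G, G.Adj u z


/-! A vertex `a ∉ S` is a non-cut vertex lying in a partite set `V₁` of a block `B`, so its
neighbours are exactly the other partite set `V₂`. Every vertex `b` sees `B` through a gate
`g ∈ B` (`b` itself, or the cut vertex of `B` through which `b` is reached):
`d(b, v) = d(b, g) + d(g, v)` for `v ∈ B`, which rests on the ear lemma for blocks. Hence every
vertex of `S ∩ V₁` other than `g` is exactly as far from `b` as `a` is. If `g` is the only vertex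
of `S` in `V₁`, the admissibility conditions on `S` force a cut vertex `c ∈ V₂`; the gate of `b`
into a second block `B'` at `c` is `c` itself, so a neighbour `u ∈ S ∩ B'` of `c` has
`d(b, u) = d(b, g) + 2 = d(b, a)`. Replacing first `a` and then `b` in this way proves the theorem.
-/
namespace SimpleGraph

variable {G : SimpleGraph V}

def ReachableIn (G : SimpleGraph V) (s : Set V) (x y : V) : Prop :=
  ∃ p : G.Walk x y, ∀ v ∈ p.support, v ∈ s

namespace ReachableIn

variable {s t : Set V} {x y z : V}

lemma symm (h : G.ReachableIn s x y) : G.ReachableIn s y x := by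
  obtain ⟨p, hp⟩ := h
  exact ⟨p.reverse, fun v hv => hp v (by simpa using hv)⟩

lemma trans (h : G.ReachableIn s x y) (h' : G.ReachableIn s y z) : G.ReachableIn s x z := by
  obtain ⟨p, hp⟩ := h
  obtain ⟨q, hq⟩ := h'
  refine ⟨p.append q, fun v hv => ?_⟩
  rcases (Walk.mem_support_append_iff p q).1 hv with hv | hv
  exacts [hp v hv, hq v hv]

lemma mono (hst : s ⊆ t) (h : G.ReachableIn s x y) : G.ReachableIn t x y := by
  obtain ⟨p, hp⟩ := h
  exact ⟨p, fun v hv => hst (hp v hv)⟩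

end ReachableIn

theorem connected_induce_iff_reachableIn {s : Set V} :
    (G.induce s).Connected ↔ s.Nonempty ∧ ∀ x ∈ s, ∀ y ∈ s, G.ReachableIn s x y := by
  constructor
  · intro h
    refine ⟨?_, fun x hx y hy => ?_⟩
    · obtain ⟨⟨x, hx⟩⟩ := h.nonempty
      exact ⟨x, hx⟩
    · obtain ⟨p⟩ := h.preconnected ⟨x, hx⟩ ⟨y, hy⟩
      refine ⟨p.map (Embedding.induce s).toHom, fun v hv => ?_⟩
      change v ∈ (p.map (Embedding.induce s).toHom).support at hv
      rw [Walk.support_map, List.mem_map] at hv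
      obtain ⟨⟨u, hu⟩, -, rfl⟩ := hv
      exact hu
  · rintro ⟨⟨x₀, hx₀⟩, h⟩
    have : Nonempty s := ⟨⟨x₀, hx₀⟩⟩
    refine ⟨fun ⟨x, hx⟩ ⟨y, hy⟩ => ?_⟩
    obtain ⟨p, hp⟩ := h x hx y hy
    exact (p.induce s hp).reachable

def induceInduceComplSingletonIso (s : Set V) (w : s) :
    (G.induce s).induce ({w}ᶜ : Set s) ≃g G.induce (s \ {(w : V)}) where
  toFun x := ⟨x.1.1, x.1.2, fun h => x.2 (by simpa [Subtype.ext_iff] using h)⟩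
  invFun x := ⟨⟨x.1, x.2.1⟩, fun h => x.2.2 (by simpa [Subtype.ext_iff] using h)⟩
  left_inv _ := rfl
  right_inv _ := rfl
  map_rel_iff' := Iff.rfl

theorem Walk.exists_prefix_first_mem {s : Set V} {u v : V} (p : G.Walk u v) (hv : v ∈ s) :
    ∃ c ∈ s, ∃ q : G.Walk u c,
      (∀ w ∈ q.support, w ∈ s → w = c) ∧ q.support ⊆ p.support := by
  induction p with
  | nil => exact ⟨_, hv, Walk.nil, by simp, by simp⟩
  | @cons a b _ hadj q ih =>
    by_cases ha : a ∈ s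
    · exact ⟨a, ha, Walk.nil, by simp, by simp⟩
    · obtain ⟨c, hc, q₀, hq₀, hsub⟩ := ih hv
      refine ⟨c, hc, Walk.cons hadj q₀, ?_, ?_⟩
      · rintro w hw hws
        rw [Walk.support_cons, List.mem_cons] at hw
        rcases hw with rfl | hw
        exacts [absurd hws ha, hq₀ w hw hws]
      · rw [Walk.support_cons, Walk.support_cons]
        exact List.cons_subset_cons _ hsub

theorem Connected.exists_adj_reachableIn_compl (hG : G.Connected) {x c : V} (hxc : x ≠ c) :
    ∃ u, G.Adj c u ∧ G.ReachableIn {c}ᶜ u x := by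
  obtain ⟨p, hp, -⟩ := hG.exists_path_of_dist c x
  obtain ⟨u, hcu, q, rfl⟩ := Walk.exists_eq_cons_of_ne hxc.symm p
  exact ⟨u, hcu, q, fun v hv hvc => ((Walk.cons_isPath_iff _ _).1 hp).2 (hvc ▸ hv)⟩

end SimpleGraph

section Blocks

variable {G : SimpleGraph V} {B : Set V}

theorem noCutVtx_induce_iff {s : Set V} :
    NoCutVtx (G.induce s) ↔
      (G.induce s).Connected ∧ ∀ w ∈ s, (G.induce (s \ {w})).Connected := by
  refine and_congr Iff.rfl ⟨fun h w hw => ?_, fun h w => ?_⟩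
  · exact (induceInduceComplSingletonIso s ⟨w, hw⟩).connected_iff.1 (h ⟨w, hw⟩)
  · exact (induceInduceComplSingletonIso s w).connected_iff.2 (h w w.2)

theorem NoCutVtx.connected_induce_diff {s : Set V} (h : NoCutVtx (G.induce s)) (w : V) :
    (G.induce (s \ {w})).Connected := by
  by_cases hw : w ∈ s
  · exact (noCutVtx_induce_iff.1 h).2 w hw
  · rw [Set.sdiff_singleton_eq_self hw]
    exact h.1

theorem NoCutVtx.union {s t : Set V} (hs : NoCutVtx (G.induce s)) (ht : NoCutVtx (G.induce t))
    {x y : V} (hx : x ∈ s ∩ t) (hy : y ∈ s ∩ t) (hxy : x ≠ y) :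
    NoCutVtx (G.induce (s ∪ t)) := by
  refine noCutVtx_induce_iff.2
    ⟨induce_union_connected hs.1.preconnected ht.1.preconnected ⟨x, hx⟩, fun w _ => ?_⟩
  rw [Set.union_sdiff_distrib]
  refine induce_union_connected (hs.connected_induce_diff w).preconnected
    (ht.connected_induce_diff w).preconnected ?_
  obtain rfl | hxw := eq_or_ne x w
  · exact ⟨y, ⟨hy.1, hxy.symm⟩, ⟨hy.2, hxy.symm⟩⟩
  · exact ⟨x, ⟨hx.1, hxw⟩, ⟨hx.2, hxw⟩⟩

theorem noCutVtx_induce_pair {x y : V} (h : G.Adj x y) : NoCutVtx (G.induce {x, y}) := by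
  refine noCutVtx_induce_iff.2 ⟨induce_pair_connected_of_adj h, ?_⟩
  rintro w (rfl | rfl)
  · rw [Set.pair_sdiff_left h.ne, induce_singleton_eq_top]
    exact connected_top
  · rw [Set.pair_sdiff_right h.ne, induce_singleton_eq_top]
    exact connected_top

theorem exists_isBlockSet_superset [Finite V] {s : Set V} (h : NoCutVtx (G.induce s)) :
    ∃ B, s ⊆ B ∧ IsBlockSet G B := by
  obtain ⟨B, hB, hmax⟩ := Set.Finite.exists_maximalFor id
    {C : Set V | s ⊆ C ∧ NoCutVtx (G.induce C)} (Set.toFinite _) ⟨s, subset_rfl, h⟩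
  exact ⟨B, hB.1, hB.2, fun C hBC hC => hBC.antisymm (hmax ⟨hB.1.trans hBC, hC⟩ hBC)⟩

theorem IsBlockSet.inter_subsingleton {B B' : Set V} (hB : IsBlockSet G B)
    (hB' : IsBlockSet G B') (hne : B ≠ B') : (B ∩ B').Subsingleton := by
  intro x hx y hy
  by_contra hxy
  have h := hB.1.union hB'.1 hx hy hxy
  exact hne ((hB.2 _ Set.subset_union_left h).trans (hB'.2 _ Set.subset_union_right h).symm)

/-- Ear lemma: `B ∪ p` is again nonseparable, hence equal to `B` by maximality. -/
theorem IsBlockSet.support_subset_of_isPath (hB : IsBlockSet G B) {v v' : V}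
    {p : G.Walk v v'} (hp : p.IsPath) (hv : v ∈ B) (hv' : v' ∈ B) (hne : v ≠ v') :
    ∀ t ∈ p.support, t ∈ B := by
  classical
  set C : Set V := B ∪ {t | t ∈ p.support}
  have hBC : B ⊆ C := Set.subset_union_left
  have hpC : ∀ t ∈ p.support, t ∈ C := fun t ht => Or.inr ht
  have hdel : ∀ w, (G.induce (C \ {w})).Connected := by
    intro w
    obtain ⟨α, hα, hαw⟩ : ∃ α ∈ B, α ≠ w := by
      by_cases h : v = w
      · exact ⟨v', hv', h ▸ hne.symm⟩
      · exact ⟨v, hv, h⟩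
    have hBw := connected_induce_iff_reachableIn.1 (hB.1.connected_induce_diff w)
    have toα : ∀ z ∈ B \ {w}, G.ReachableIn (C \ {w}) z α := fun z hz =>
      (hBw.2 z hz α ⟨hα, hαw⟩).mono (Set.sdiff_subset_sdiff_left hBC)
    -- a vertex `u` of `p` reaches `v` or `v'` along the half of `p` that avoids `w`
    have key : ∀ u ∈ C \ {w}, G.ReachableIn (C \ {w}) u α := by
      rintro u ⟨hu | hu, huw⟩
      · exact toα u ⟨hu, huw⟩
      obtain ⟨q, r, -, -, hqr⟩ := hp.mem_support_iff_exists_append.1 hu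
      have hsub : ∀ t, t ∈ q.support ∨ t ∈ r.support → t ∈ C := fun t ht =>
        hpC t (hqr ▸ (Walk.mem_support_append_iff q r).2 ht)
      have hwu : w ≠ u := fun h => huw h.symm
      by_cases hwq : w ∈ q.support
      · have hwr : w ∉ r.support := fun hwr =>
          (hqr ▸ hp).ne_of_mem_support_of_append hwu hwq hwr rfl
        refine .trans ⟨r, fun t ht => ⟨hsub t (Or.inr ht), fun h => hwr (h ▸ ht)⟩⟩
          (toα v' ⟨hv', fun h => hwr (h ▸ r.end_mem_support)⟩)
      · refine .trans ⟨q.reverse, fun t ht => ?_⟩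
          (toα v ⟨hv, fun h => hwq (h ▸ q.start_mem_support)⟩)
        rw [Walk.support_reverse, List.mem_reverse] at ht
        exact ⟨hsub t (Or.inl ht), fun h => hwq (h ▸ ht)⟩
    exact connected_induce_iff_reachableIn.2 ⟨⟨α, hBC hα, hαw⟩,
      fun x hx y hy => (key x hx).trans (key y hy).symm⟩
  have hCnc : NoCutVtx (G.induce C) := noCutVtx_induce_iff.2
    ⟨induce_union_connected hB.1.1.preconnected p.connected_induce_support.preconnected
      ⟨v, hv, p.start_mem_support⟩, fun w _ => hdel w⟩
  intro t ht
  rw [hB.2 C hBC hCnc]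
  exact hpC t ht

theorem IsBlockSet.mem_of_adj (hB : IsBlockSet G B) (hBnt : B.Nontrivial) {v z : V}
    (hv : v ∈ B) (hvc : ¬ CutVtx G v) (hadj : G.Adj v z) : z ∈ B := by
  classical
  obtain ⟨b, hb, hbv⟩ := hBnt.exists_ne v
  obtain ⟨W, hW⟩ := (connected_induce_iff_reachableIn.1 (not_not.1 hvc)).2 z hadj.ne' b hbv
  obtain ⟨c, hc, q, -, hqW⟩ := W.exists_prefix_first_mem hb
  have hvq : v ∉ q.bypass.support := fun h =>
    hW v (hqW (q.support_bypass_subset_support h)) rfl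
  have hcv : v ≠ c := fun h => hvq (h ▸ q.bypass.end_mem_support)
  exact hB.support_subset_of_isPath (p := .cons hadj q.bypass) (q.bypass_isPath.cons hvq)
    hv hc hcv z (by simp)

theorem IsBlockSet.exists_cutVtx_mem (hG : G.Connected) (hB : IsBlockSet G B)
    (hBnt : B.Nontrivial) (hBu : B ≠ Set.univ) : ∃ c ∈ B, CutVtx G c := by
  obtain ⟨z, hz⟩ := (Set.ne_univ_iff_exists_notMem B).1 hBu
  obtain ⟨b, hb⟩ := hBnt.nonempty
  obtain ⟨W⟩ := hG.preconnected b z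
  obtain ⟨d, -, hd, hd'⟩ := W.exists_boundary_dart B hb hz
  exact ⟨d.fst, hd, by_contra fun hcut => hd' (hB.mem_of_adj hBnt hd hcut d.adj)⟩

theorem IsBlockSet.eq_of_walks (hB : IsBlockSet G B) {x c c' : V} (hc : c ∈ B) (hc' : c' ∈ B)
    (p : G.Walk x c) (p' : G.Walk x c') (hp : ∀ v ∈ p.support, v ∈ B → v = c)
    (hp' : ∀ v ∈ p'.support, v ∈ B → v = c') : c = c' := by
  classical
  by_contra hne
  set W := p.reverse.append p'
  -- a path `c → c'` through vertices of `W` stays in `B` (ear lemma), so its first step is the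
  -- edge `cc'`, which `W` does not use
  obtain ⟨y, hcy, P, hP⟩ := Walk.exists_eq_cons_of_ne hne W.bypass
  have hyW : y ∈ W.support := W.support_bypass_subset_support (by rw [hP]; simp)
  have hyB := hB.support_subset_of_isPath (hP ▸ W.bypass_isPath) hc hc' hne y (by simp)
  have hy : y = c' := by
    rcases (Walk.mem_support_append_iff _ _).1 hyW with h | h
    · exact absurd (hp y (by simpa using h) hyB) hcy.ne'
    · exact hp' y h hyB
  subst hy
  have hedge : s(c, y) ∈ W.edges := W.edges_bypass_subset_edges (by rw [hP]; simp)
  rw [Walk.edges_append, List.mem_append, Walk.edges_reverse, List.mem_reverse] at hedge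
  rcases hedge with h | h
  · exact hne (hp y (p.snd_mem_support_of_mem_edges h) hc').symm
  · exact hne (hp' c (p'.fst_mem_support_of_mem_edges h) hc)

theorem IsBlockSet.mem_support_of_walk {B' : Set V} (hB : IsBlockSet G B)
    (hB' : IsBlockSet G B') (hne : B ≠ B') {c x y : V} (hcB : c ∈ B) (hcB' : c ∈ B')
    (hx : x ∈ B) (hy : y ∈ B')
    (p : G.Walk x y) : c ∈ p.support := by
  obtain ⟨q, hq⟩ := (connected_induce_iff_reachableIn.1 hB'.1.1).2 y hy c hcB'
  obtain ⟨c₀, hc₀, q₀, hq₀, hq₀p⟩ := p.reverse.exists_prefix_first_mem hx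
  have hcc₀ : c = c₀ := hB.eq_of_walks hcB hc₀ q q₀
    (fun v hv hvB => hB.inter_subsingleton hB' hne ⟨hvB, hq v hv⟩ ⟨hcB, hcB'⟩) hq₀
  simpa [hcc₀] using hq₀p q₀.end_mem_support

theorem CutVtx.exists_isBlockSet_ne [Finite V] [Nontrivial V] (hG : G.Connected) {c : V}
    (hc : CutVtx G c) (hB : IsBlockSet G B) :
    ∃ B', IsBlockSet G B' ∧ c ∈ B' ∧ B' ≠ B := by
  by_contra! h
  have hnbr : ∀ u, G.Adj c u → u ∈ B \ {c} := fun u hu => by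
    obtain ⟨B', hsub, hB'⟩ := exists_isBlockSet_superset (noCutVtx_induce_pair hu)
    exact ⟨h B' hB' (hsub (by simp)) ▸ hsub (by simp), hu.ne'⟩
  refine hc (connected_induce_iff_reachableIn.2 ⟨?_, fun x hx y hy => ?_⟩)
  · obtain ⟨x, hx⟩ := exists_ne c
    exact ⟨x, hx⟩
  obtain ⟨u, hu, hux⟩ := hG.exists_adj_reachableIn_compl hx
  obtain ⟨u', hu', hu'y⟩ := hG.exists_adj_reachableIn_compl hy
  have huu' := (connected_induce_iff_reachableIn.1 (hB.1.connected_induce_diff c)).2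
    u (hnbr u hu) u' (hnbr u' hu')
  exact (hux.symm.trans (huu'.mono fun v hv => hv.2)).trans hu'y

def IsGate (G : SimpleGraph V) (B : Set V) (x c : V) : Prop :=
  c ∈ B ∧ ∀ v ∈ B, G.dist x v = G.dist x c + G.dist c v

theorem isGate_self {x : V} (hx : x ∈ B) : IsGate G B x x :=
  ⟨hx, fun v _ => by rw [dist_self, zero_add]⟩

theorem IsGate.exists_walk (hG : G.Connected) {x c : V} (h : IsGate G B x c) :
    ∃ p : G.Walk x c, ∀ v ∈ p.support, v ∈ B → v = c := by
  classical
  obtain ⟨p, hp⟩ := hG.exists_walk_length_eq_dist x c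
  refine ⟨p, fun v hv hvB => by_contra fun hvc => ?_⟩
  have h₁ : G.dist x v ≤ G.dist x c :=
    (dist_le _).trans ((p.length_takeUntil_le_length hv).trans hp.le)
  have h₂ := h.2 v hvB
  have h₃ := hG.pos_dist_of_ne (Ne.symm hvc)
  omega

theorem IsBlockSet.exists_isGate (hG : G.Connected) (hB : IsBlockSet G B) (hBnt : B.Nontrivial)
    {x : V} (hx : x ∉ B) : ∃ c, CutVtx G c ∧ IsGate G B x c := by
  classical
  obtain ⟨b, hb⟩ := hBnt.nonempty
  obtain ⟨W⟩ := hG.preconnected x b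
  obtain ⟨c, hc, q, hq, -⟩ := W.exists_prefix_first_mem hb
  refine ⟨c, ?_, hc, fun v hv => le_antisymm hG.dist_triangle ?_⟩
  · obtain ⟨u, hcu, q', hq'⟩ :=
      Walk.exists_eq_cons_of_ne (fun h : c = x => hx (h ▸ hc)) q.reverse
    have hu : u ∈ q.support := by
      rw [← List.mem_reverse, ← Walk.support_reverse, hq']
      simp
    exact by_contra fun hcut => hcu.ne (hq u hu (hB.mem_of_adj hBnt hc hcut hcu)).symm
  obtain ⟨W', hW'⟩ := hG.exists_walk_length_eq_dist x v
  obtain ⟨c₀, hc₀, q₀, hq₀, hq₀W'⟩ := W'.exists_prefix_first_mem hv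
  have hcW' : c ∈ W'.support :=
    hB.eq_of_walks hc hc₀ q q₀ hq hq₀ ▸ hq₀W' q₀.end_mem_support
  calc G.dist x c + G.dist c v
      ≤ (W'.takeUntil c hcW').length + (W'.dropUntil c hcW').length :=
        add_le_add (dist_le _) (dist_le _)
    _ = G.dist x v := by rw [← Walk.length_append, Walk.take_spec, hW']

theorem IsGate.isGate_of_mem_inter {B' : Set V} (hG : G.Connected) (hB : IsBlockSet G B)
    (hB' : IsBlockSet G B') (hne : B ≠ B') (hB'nt : B'.Nontrivial) {x c c' : V}
    (h : IsGate G B x c) (hc' : c' ∈ B ∩ B') (hcc' : c ≠ c') : IsGate G B' x c' := by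
  obtain ⟨hc'B, hc'B'⟩ := hc'
  obtain ⟨p, hp⟩ := h.exists_walk hG
  have hc'p : c' ∉ p.support := fun h' => hcc' (hp c' h' hc'B).symm
  have hxB' : x ∉ B' := fun hxB' =>
    hc'p (by simpa using hB.mem_support_of_walk hB' hne hc'B hc'B' h.1 hxB' p.reverse)
  obtain ⟨g, -, hg⟩ := hB'.exists_isGate hG hB'nt hxB'
  obtain ⟨q, hq⟩ := hg.exists_walk hG
  obtain rfl : g = c' := by
    by_contra hgc'
    have := hB.mem_support_of_walk hB' hne hc'B hc'B' h.1 hg.1 (p.reverse.append q)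
    rw [Walk.mem_support_append_iff, Walk.support_reverse, List.mem_reverse] at this
    exact this.elim hc'p fun h' => hgc' (hq c' h' hc'B').symm
  exact hg

end Blocks

namespace CompBipOn

variable {G : SimpleGraph V} {B V1 V2 : Set V} {x y z : V}

theorem symm (h : CompBipOn G B V1 V2) : CompBipOn G B V2 V1 := by
  obtain ⟨h1, h2, hdisj, hunion, hadj⟩ := h
  refine ⟨h2, h1, hdisj.symm, Set.union_comm V2 V1 ▸ hunion, fun x hx y hy => ?_⟩
  rw [hadj x hx y hy]
  tauto

theorem mem_left (h : CompBipOn G B V1 V2) (hx : x ∈ V1) : x ∈ B :=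
  h.2.2.2.1 ▸ Or.inl hx

theorem mem_right (h : CompBipOn G B V1 V2) (hx : x ∈ V2) : x ∈ B :=
  h.symm.mem_left hx

theorem mem_or_mem (h : CompBipOn G B V1 V2) (hx : x ∈ B) : x ∈ V1 ∨ x ∈ V2 := by
  rwa [← h.2.2.2.1] at hx

theorem ne (h : CompBipOn G B V1 V2) (hx : x ∈ V1) (hy : y ∈ V2) : x ≠ y :=
  fun hxy => Set.disjoint_left.1 h.2.2.1 hx (hxy ▸ hy)

theorem nontrivial (h : CompBipOn G B V1 V2) : B.Nontrivial := by
  obtain ⟨x, hx⟩ := h.1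
  obtain ⟨y, hy⟩ := h.2.1
  exact ⟨x, h.mem_left hx, y, h.mem_right hy, h.ne hx hy⟩

theorem adj (h : CompBipOn G B V1 V2) (hx : x ∈ V1) (hy : y ∈ V2) : G.Adj x y :=
  (h.2.2.2.2 x (h.mem_left hx) y (h.mem_right hy)).2 (Or.inl ⟨hx, hy⟩)

theorem not_adj (h : CompBipOn G B V1 V2) (hx : x ∈ V1) (hy : y ∈ V1) : ¬ G.Adj x y := by
  intro hxy
  rcases (h.2.2.2.2 x (h.mem_left hx) y (h.mem_left hy)).1 hxy with ⟨-, hy'⟩ | ⟨hx', -⟩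
  exacts [h.ne hy hy' rfl, h.ne hx hx' rfl]

theorem dist_eq_one (h : CompBipOn G B V1 V2) (hx : x ∈ V1) (hy : y ∈ V2) : G.dist x y = 1 :=
  dist_eq_one_iff_adj.2 (h.adj hx hy)

theorem dist_eq_two (hG : G.Connected) (h : CompBipOn G B V1 V2) (hx : x ∈ V1) (hy : y ∈ V1)
    (hxy : x ≠ y) : G.dist x y = 2 := by
  obtain ⟨z, hz⟩ := h.2.1
  have hle : G.dist x y ≤ 2 := dist_le (.cons (h.adj hx hz) (.cons (h.adj hy hz).symm .nil))
  have hlt := hG.one_lt_dist_of_ne_of_not_adj hxy (h.not_adj hx hy)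
  omega

theorem dist_eq_dist (hG : G.Connected) (h : CompBipOn G B V1 V2) (hz : z ∈ B) (hx : x ∈ V1)
    (hy : y ∈ V1) (hzx : z ≠ x) (hzy : z ≠ y) : G.dist z x = G.dist z y := by
  rcases h.mem_or_mem hz with hz | hz
  · rw [h.dist_eq_two hG hz hx hzx, h.dist_eq_two hG hz hy hzy]
  · rw [h.symm.dist_eq_one hz hx, h.symm.dist_eq_one hz hy]

theorem ncard_inter_eq_add [Finite V] (h : CompBipOn G B V1 V2) (K : Set V) :
    (B ∩ K).ncard = (V1 ∩ K).ncard + (V2 ∩ K).ncard := by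
  rw [← Set.ncard_union_eq (h.2.2.1.mono Set.inter_subset_left Set.inter_subset_left),
    ← Set.union_inter_distrib_right, h.2.2.2.1]

end CompBipOn

namespace ClassB

variable {G : SimpleGraph V} {B : Set V}

theorem connected (hG : ClassB G) : G.Connected :=
  hG.1.1

theorem nontrivial_of_isBlockSet (hG : ClassB G) (hB : IsBlockSet G B) : B.Nontrivial := by
  obtain ⟨V1, V2, hbip⟩ := hG.1.2 B hB
  exact hbip.nontrivial

theorem nontrivial (hG : ClassB G) : Nontrivial V := by
  obtain ⟨B, -, hB, -⟩ := hG.2.1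
  obtain ⟨x, -, y, -, hxy⟩ := hG.nontrivial_of_isBlockSet hB
  exact ⟨x, y, hxy⟩

theorem exists_isBlockSet_mem [Finite V] (hG : ClassB G) (a : V) :
    ∃ B, IsBlockSet G B ∧ a ∈ B := by
  have := hG.nontrivial
  obtain ⟨z, hz⟩ := hG.connected.preconnected.exists_adj_of_nontrivial a
  obtain ⟨B, hsub, hB⟩ := exists_isBlockSet_superset (noCutVtx_induce_pair hz)
  exact ⟨B, hB, hsub (by simp)⟩

theorem one_le_ncard_inter_cutSet [Finite V] (hG : ClassB G) (hB : IsBlockSet G B) :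
    1 ≤ (B ∩ cutSet G).ncard := by
  have hBu : B ≠ Set.univ := by
    rintro rfl
    obtain ⟨B₁, B₂, hB₁, hB₂, hne⟩ := hG.2.1
    exact hne ((hB₁.2 _ (Set.subset_univ _) hB.1).trans (hB₂.2 _ (Set.subset_univ _) hB.1).symm)
  obtain ⟨c, hc, hcut⟩ :=
    hB.exists_cutVtx_mem hG.connected (hG.nontrivial_of_isBlockSet hB) hBu
  exact (Set.ncard_pos).2 ⟨c, hc, hcut⟩

end ClassB

namespace AssocSet

variable [Finite V] {G : SimpleGraph V} {S B V1 V2 : Set V}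

theorem inter_nonempty (hG : ClassB G) (hS : AssocSet G S) (hB : IsBlockSet G B)
    (hbip : CompBipOn G B V1 V2) : (S ∩ V1).Nonempty := by
  by_cases hc : (V1 ∩ cutSet G).Nonempty
  · obtain ⟨c, hc1, hcc⟩ := hc
    exact ⟨c, hS.1 c hcc, hc1⟩
  rw [Set.not_nonempty_iff_eq_empty] at hc
  have hSB := hS.2 B V1 V2 hB hbip
  by_cases hK : V1.ncard = 1 ∧ V2.ncard = 1
  · obtain ⟨v, hv⟩ := hbip.1
    exact ⟨v, hSB.1 hK (hbip.mem_left hv), hv⟩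
  have hk := hbip.ncard_inter_eq_add (cutSet G)
  rw [hc, Set.ncard_empty, zero_add] at hk
  have hV1 : ∀ T : Set V, (S ∩ (V1 \ T)).ncard = 1 → (S ∩ V1).Nonempty := fun T hT =>
    (Set.nonempty_of_ncard_ne_zero (by rw [hT]; exact one_ne_zero)).mono
      (Set.inter_subset_inter_right _ Set.sdiff_subset)
  have := hG.one_le_ncard_inter_cutSet hB
  have := hG.2.2 B hB
  obtain h1 | h2 : (B ∩ cutSet G).ncard = 1 ∨ (B ∩ cutSet G).ncard = 2 := by omega
  · exact hV1 _ ((hSB.2 hK).1 h1).1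
  · exact hV1 _ (((hSB.2 hK).2 h2).2.1 (hk ▸ h2)).1

theorem inter_nontrivial (hG : ClassB G) (hS : AssocSet G S) (hB : IsBlockSet G B)
    (hbip : CompBipOn G B V1 V2) (hBS : ¬ B ⊆ S) (hV2 : V2 ∩ cutSet G = ∅) :
    (S ∩ V1).Nontrivial := by
  have hSB := hS.2 B V1 V2 hB hbip
  have hK : ¬ (V1.ncard = 1 ∧ V2.ncard = 1) := fun hK => hBS (hSB.1 hK)
  have hk := hbip.ncard_inter_eq_add (cutSet G)
  rw [hV2, Set.ncard_empty, add_zero] at hk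
  have hcutS : V1 ∩ cutSet G ⊆ S ∩ V1 := fun c hc => ⟨hS.1 c hc.2, hc.1⟩
  have := hG.one_le_ncard_inter_cutSet hB
  have := hG.2.2 B hB
  obtain h1 | h2 : (B ∩ cutSet G).ncard = 1 ∨ (B ∩ cutSet G).ncard = 2 := by omega
  · obtain ⟨c, hc⟩ := Set.ncard_eq_one.1 (hk ▸ h1)
    obtain ⟨a, ha⟩ := Set.ncard_eq_one.1 ((hSB.2 hK).1 h1).1
    have hcm : c ∈ V1 ∩ cutSet G := hc ▸ rfl
    have ham : a ∈ S ∩ (V1 \ cutSet G) := ha ▸ rfl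
    exact ⟨c, hcutS hcm, a, ⟨ham.1, ham.2.1⟩, fun h => ham.2.2 (h ▸ hcm.2)⟩
  · exact (Set.one_lt_ncard_iff_nontrivial.1 (by omega)).mono hcutS

theorem exists_adj (hG : ClassB G) (hS : AssocSet G S) (hB : IsBlockSet G B) {c : V}
    (hc : c ∈ B) : ∃ u ∈ S, u ∈ B ∧ G.Adj c u := by
  obtain ⟨V1, V2, hbip⟩ := hG.1.2 B hB
  rcases hbip.mem_or_mem hc with hc | hc
  · obtain ⟨u, huS, hu⟩ := hS.inter_nonempty hG hB hbip.symm
    exact ⟨u, huS, hbip.mem_right hu, hbip.adj hc hu⟩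
  · obtain ⟨u, huS, hu⟩ := hS.inter_nonempty hG hB hbip
    exact ⟨u, huS, hbip.mem_left hu, hbip.symm.adj hc hu⟩

theorem exists_dist_eq_of_mem_left (hG : ClassB G) (hS : AssocSet G S) (hB : IsBlockSet G B)
    (hbip : CompBipOn G B V1 V2) {a b : V} (haV1 : a ∈ V1) (haS : a ∉ S) (hab : a ≠ b) :
    ∃ a' ∈ S, G.dist a' b = G.dist a b := by
  have hconn := hG.connected
  have haB := hbip.mem_left haV1
  obtain ⟨g, hg, hga⟩ : ∃ g, IsGate G B b g ∧ g ≠ a := by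
    by_cases hbB : b ∈ B
    · exact ⟨b, isGate_self hbB, hab.symm⟩
    · obtain ⟨g, hgcut, hg⟩ := hB.exists_isGate hconn (hG.nontrivial_of_isBlockSet hB) hbB
      exact ⟨g, hg, fun h => haS (hS.1 a (h ▸ hgcut))⟩
  have hdist : ∀ a' ∈ V1, G.dist a' b = G.dist b g + G.dist g a' := fun a' ha' => by
    rw [dist_comm, hg.2 a' (hbip.mem_left ha')]
  by_cases h : ∃ a' ∈ S ∩ V1, a' ≠ g
  · obtain ⟨a', ⟨ha'S, ha'V1⟩, ha'g⟩ := h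
    refine ⟨a', ha'S, ?_⟩
    rw [hdist a' ha'V1, hdist a haV1, hbip.dist_eq_dist hconn hg.1 ha'V1 haV1 ha'g.symm hga]
  -- otherwise `g` is the only vertex of `S` in `V1`; then `V2` holds a cut vertex `c`, and a
  -- neighbour `u ∈ S` of `c` in another block is as far from `b` as `a` is
  push Not at h
  obtain ⟨g', hg'⟩ := hS.inter_nonempty hG hB hbip
  have hgV1 : g ∈ V1 := h g' hg' ▸ hg'.2
  obtain ⟨c, hcV2, hccut⟩ : ∃ c ∈ V2, CutVtx G c := by
    by_contra! hno
    obtain ⟨x, hx, y, hy, hxy⟩ := hS.inter_nontrivial hG hB hbip (fun hBS => haS (hBS haB))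
      (Set.eq_empty_of_forall_notMem fun c hc => hno c hc.1 hc.2)
    exact hxy ((h x hx).trans (h y hy).symm)
  have := hG.nontrivial
  obtain ⟨B', hB', hcB', hB'B⟩ := hccut.exists_isBlockSet_ne hconn hB
  obtain ⟨u, huS, huB', hcu⟩ := hS.exists_adj hG hB' hcB'
  have hc : IsGate G B' b c := hg.isGate_of_mem_inter hconn hB hB' hB'B.symm
    (hG.nontrivial_of_isBlockSet hB') ⟨hbip.mem_right hcV2, hcB'⟩ (hbip.ne hgV1 hcV2)
  refine ⟨u, huS, ?_⟩
  calc G.dist u b = G.dist b c + G.dist c u := by rw [dist_comm, hc.2 u huB']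
    _ = G.dist b g + G.dist g c + 1 := by
      rw [hg.2 c (hbip.mem_right hcV2), dist_eq_one_iff_adj.2 hcu]
    _ = G.dist b g + G.dist g a := by
      rw [hbip.dist_eq_one hgV1 hcV2, hbip.dist_eq_two hconn hgV1 haV1 hga]
    _ = G.dist a b := by rw [← hg.2 a haB, dist_comm]

theorem exists_dist_eq (hG : ClassB G) (hS : AssocSet G S) {a b : V} (hab : a ≠ b) :
    ∃ a' ∈ S, G.dist a' b = G.dist a b := by
  by_cases haS : a ∈ S
  · exact ⟨a, haS, rfl⟩
  obtain ⟨B, hB, haB⟩ := hG.exists_isBlockSet_mem a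
  obtain ⟨V1, V2, hbip⟩ := hG.1.2 B hB
  rcases hbip.mem_or_mem haB with ha | ha
  · exact hS.exists_dist_eq_of_mem_left hG hB hbip ha haS hab
  · exact hS.exists_dist_eq_of_mem_left hG hB hbip.symm ha haS hab

end AssocSet

theorem stmt_4 {V : Type*} [Fintype V] (G : SimpleGraph V) (hG : ClassB G)
    (S : Set V) (hS : AssocSet G S) :
    ∀ a b : V, ∃ a' ∈ S, ∃ b' ∈ S, G.dist a b = G.dist a' b' := by
  intro a b
  obtain rfl | hab := eq_or_ne a b
  · obtain ⟨B, hB, -⟩ := hG.exists_isBlockSet_mem a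
    obtain ⟨V1, V2, hbip⟩ := hG.1.2 B hB
    obtain ⟨s, hs, -⟩ := hS.inter_nonempty hG hB hbip
    exact ⟨s, hs, s, hs, by simp⟩
  obtain ⟨a', ha'S, ha'⟩ := hS.exists_dist_eq hG hab
  have hba' : b ≠ a' := by
    rintro rfl
    exact hab (hG.connected.dist_eq_zero_iff.1 (ha'.symm.trans dist_self))
  obtain ⟨b', hb'S, hb'⟩ := hS.exists_dist_eq hG hba'
  exact ⟨a', ha'S, b', hb'S, by rw [← ha', dist_comm, ← hb', dist_comm]⟩
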